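/- arXiv:2105.11009 — 4 statements merged into one kernel-verified Lean document; each statement's English description precedes it below -/
import Mathlib

section
/- Let W be a complete discrete valuation ring (e.g. the ring of Witt vectors of a perfect field) and let M be a finitely generated W-module equipped with an injective additive endomorphism V such that M is V-adically separated and complete and M/VM has finite length. If the torsion submodule T of M satisfies V(T) ⊆ T, then T = 0; that is, M is a finite free W-module. -/
/-!
A finitely generated torsion module over a DVR has finite length, so the descending chain
`T ⊓ V^n M` of `W`-submodules of `T` stabilizes; since `⋂ V^n M = 0` it stabilizes at `0`.
But `V`-stability of `T` gives `V^N T ⊆ T ⊓ V^N M = 0`, and `V^N` is injective, so `T = 0`.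
-/

open scoped nonZeroDivisors

theorem isArtinian_of_isTorsionBy {R N : Type*} [CommRing R] [IsNoetherianRing R]
    [Ring.KrullDimLE 1 R] [AddCommGroup N] [Module R N] [Module.Finite R N]
    {r : R} (hr : r ∈ R⁰) (hN : Module.IsTorsionBy R N r) : IsArtinian R N := by
  let := hN.module
  have : IsArtinianRing (R ⧸ Ideal.span {r}) :=
    isArtinian_of_tower R (isFiniteLength_iff_isNoetherian_isArtinian.mp
      (isFiniteLength_quotient_span_singleton (R := R) hr)).2
  have : Module.Finite (R ⧸ Ideal.span {r}) N := Module.Finite.of_restrictScalars_finite R _ N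
  exact isArtinian_of_surjective_algebraMap (Ideal.Quotient.mk_surjective (I := Ideal.span {r}))

theorem isArtinian_torsion (R M : Type*) [CommRing R] [IsNoetherianRing R]
    [Ring.KrullDimLE 1 R] [AddCommGroup M] [Module R M] [Module.Finite R M] :
    IsArtinian R (Submodule.torsion R M) := by
  obtain ⟨r, hr_ann, hr⟩ := Submodule.annihilator_top_inter_nonZeroDivisors
    (R := R) (M := Submodule.torsion R M) Submodule.torsion_isTorsion
  exact isArtinian_of_isTorsionBy hr fun x ↦ Submodule.mem_annihilator.mp hr_ann x trivial

theorem Submodule.exists_disjoint_of_antitone_of_iInf_eq_bot {R M : Type*} [Ring R]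
    [AddCommGroup M] [Module R M] (T : Submodule R M) [IsArtinian R T]
    {F : ℕ → Submodule R M} (hF : Antitone F) (hsep : ⨅ n, F n = ⊥) :
    ∃ N, Disjoint T (F N) := by
  let f : ℕ →o (Submodule R T)ᵒᵈ := ⟨fun n ↦ (F n).comap T.subtype, fun _ _ h ↦ comap_mono (hF h)⟩
  obtain ⟨N, hN⟩ := IsArtinian.monotone_stabilizes f
  refine ⟨N, disjoint_iff_comap_eq_bot.mpr (eq_bot_iff.mpr ?_)⟩
  calc (F N).comap T.subtype
      ≤ ⨅ n, (F n).comap T.subtype := le_iInf fun n ↦ by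
        have hstable : (F N).comap T.subtype = (F (max N n)).comap T.subtype :=
          hN (max N n) (le_max_left N n)
        exact hstable.trans_le (comap_mono (hF (le_max_right N n)))
    _ = ⊥ := by rw [← comap_iInf, hsep, comap_bot, ker_subtype]

theorem antitone_of_coe_eq_range_iterate {R M : Type*} [Semiring R] [AddCommMonoid M]
    [Module R M] {V : M → M} {F : ℕ → Submodule R M}
    (hF : ∀ n, (F n : Set M) = Set.range V^[n]) : Antitone F := by
  refine antitone_nat_of_succ_le fun n x hx ↦ ?_
  obtain ⟨y, rfl⟩ : x ∈ Set.range V^[n + 1] := hF (n + 1) ▸ hx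
  show _ ∈ (F n : Set M)
  exact hF n ▸ ⟨V y, (Function.iterate_succ_apply V n y).symm⟩

theorem stmt_0_general
    (W : Type*) [CommRing W] [IsDomain W] [IsDiscreteValuationRing W]
    (M : Type*) [AddCommGroup M] [Module W M] [Module.Finite W M]
    (V : M →+ M) (hVinj : Function.Injective V)
    (F : ℕ → Submodule W M)
    (hF : ∀ n, (F n : Set M) = Set.range ((V : M → M)^[n]))
    -- `M` is `V`-adically separated
    (hsep : ⨅ n, F n = ⊥)
    -- the torsion submodule is stable under `V`
    (hT : ∀ x ∈ Submodule.torsion W M, V x ∈ Submodule.torsion W M) :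
    Submodule.torsion W M = ⊥ ∧ Module.Free W M := by
  have := isArtinian_torsion W M
  obtain ⟨N, hN⟩ := (Submodule.torsion W M).exists_disjoint_of_antitone_of_iInf_eq_bot
    (antitone_of_coe_eq_range_iterate hF) hsep
  have htors : Submodule.torsion W M = ⊥ := by
    refine eq_bot_iff.mpr fun x hx ↦ (Submodule.mem_bot W).mpr (hVinj.iterate N ?_)
    have hx_mem_F : (V : M → M)^[N] x ∈ F N := by
      show _ ∈ (F N : Set M)
      exact hF N ▸ Set.mem_range_self x
    have hx_mem_T : (V : M → M)^[N] x ∈ Submodule.torsion W M := Set.MapsTo.iterate hT N hx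
    rw [Submodule.disjoint_def.mp hN _ hx_mem_T hx_mem_F, iterate_map_zero]
  have : Module.IsTorsionFree W M := Submodule.isTorsionFree_iff_torsion_eq_bot.mpr htors
  exact ⟨htors, Module.free_of_finite_type_torsion_free'⟩

theorem stmt_0
    (W : Type*) [CommRing W] [IsDomain W] [IsDiscreteValuationRing W]
    [IsAdicComplete (IsLocalRing.maximalIdeal W) W]
    (M : Type*) [AddCommGroup M] [Module W M] [Module.Finite W M]
    (V : M →+ M) (hVinj : Function.Injective V)
    (F : ℕ → Submodule W M)
    (hF : ∀ n, (F n : Set M) = Set.range ((V : M → M)^[n]))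
    -- `M` is `V`-adically separated
    (hsep : ⨅ n, F n = ⊥)
    -- `M` is `V`-adically complete
    (hcomplete : ∀ x : ℕ → M, (∀ n, x (n + 1) - x n ∈ F n) → ∃ L, ∀ n, L - x n ∈ F n)
    -- `M/V^n M` has finite length over `W`
    (hlen : ∀ n, IsFiniteLength W (M ⧸ F n))
    -- the torsion submodule is stable under `V`
    (hT : ∀ x ∈ Submodule.torsion W M, V x ∈ Submodule.torsion W M) :
    Submodule.torsion W M = ⊥ ∧ Module.Free W M :=
  stmt_0_general W M V hVinj F hF hsep hT
end

section
/- Let W be the ring of Witt vectors of a perfect field of characteristic p, let M be a W-module with an additive endomorphism F (Frobenius-semilinear) and V (inverse-Frobenius-semilinear) satisfying FV = VF = p. If M is V-adically separated and complete, each M/V^n M has finite length, and M/FM has finite k-dimension at most c for a fixed constant c, then M is a finitely generated W-module. -/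
/-!
Lifts of generators of `M/VM`, together with `V` applied to lifts of generators of `M/FM`,
generate `M` modulo `V(FM) = pM`. Since `p^n M = V^n F^n M ⊆ V^n M`, `M` is `p`-adically
separated, and as `W(k)` is `p`-adically complete, the complete form of Nakayama's lemma shows
that these finitely many elements generate `M`.
-/

open Set Submodule

section Ring

variable {R M : Type*} [Ring R] [AddCommGroup M] [Module R M]

theorem isFiniteLength_of_krullDim_le {c : ℕ} (h : Order.krullDim (Submodule R M) ≤ c) :
    IsFiniteLength R M := by
  rw [← Module.length_ne_top_iff]
  intro htop
  rw [← Module.coe_length, htop] at h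
  exact absurd h (by exact_mod_cast (ENat.natCast_lt_top c).not_ge)

theorem Submodule.exists_fin_sup_span_eq_top (N : Submodule R M) [Module.Finite R (M ⧸ N)] :
    ∃ (n : ℕ) (v : Fin n → M), N ⊔ span R (range v) = ⊤ := by
  obtain ⟨n, s, hs⟩ := Module.Finite.exists_fin (R := R) (M := M ⧸ N)
  choose v hv using fun i ↦ N.mkQ_surjective (s i)
  refine ⟨n, v, ?_⟩
  rw [← map_mkQ_eq_top, map_span, ← range_comp, show ⇑N.mkQ ∘ v = s from funext hv, hs]

theorem Submodule.exists_sub_mem_of_sup_eq_top {N P : Submodule R M} (h : N ⊔ P = ⊤) (m : M) :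
    ∃ n ∈ N, m - n ∈ P := by
  obtain ⟨y, hy, z, hz, rfl⟩ := mem_sup.mp (h ▸ mem_top : m ∈ N ⊔ P)
  exact ⟨y, hy, by rwa [add_sub_cancel_left]⟩

end Ring

instance IsPrecomplete.pi {R : Type*} [CommRing R] {I : Ideal R} {ι : Type*} [Finite ι]
    {M : ι → Type*} [∀ i, AddCommGroup (M i)] [∀ i, Module R (M i)]
    [∀ i, IsPrecomplete I (M i)] : IsPrecomplete I (∀ i, M i) := by
  classical
  have := Fintype.ofFinite ι
  rw [← AdicCompletion.of_surjective_iff]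
  intro y
  choose x hx using fun i ↦ AdicCompletion.of_surjective I (M i) (AdicCompletion.pi I M y i)
  refine ⟨x, (AdicCompletion.piEquivOfFintype I M).injective ?_⟩
  ext1 i
  rw [AdicCompletion.piEquivOfFintype_apply, AdicCompletion.piEquivOfFintype_apply, ← hx,
    AdicCompletion.pi, LinearMap.pi_apply, AdicCompletion.map_of]
  rfl

section CommRing

variable {R M : Type*} [CommRing R] [AddCommGroup M] [Module R M]

theorem Submodule.span_range_eq_top_of_sup_smul_top_eq_top {I : Ideal R} [IsPrecomplete I R]
    [IsHausdorff I M] {ι : Type*} [Finite ι] {v : ι → M}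
    (h : span R (range v) ⊔ I • ⊤ = ⊤) : span R (range v) = ⊤ := by
  have := Fintype.ofFinite ι
  have hsurj : Function.Surjective
      ((I • ⊤ : Submodule R M).mkQ ∘ₗ Fintype.linearCombination R v) := by
    rw [← LinearMap.range_eq_top, LinearMap.range_comp, Fintype.range_linearCombination,
      map_mkQ_eq_top, sup_comm, h]
  rw [← Fintype.range_linearCombination, LinearMap.range_eq_top]
  exact surjective_of_mkQ_comp_surjective hsurj

theorem isHausdorff_span_natCast_of_iInf_eq_bot (p : ℕ) (Fil : ℕ → Submodule R M)
    (hpow : ∀ n (m : M), p ^ n • m ∈ Fil n) (hsep : ⨅ n, Fil n = ⊥) :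
    IsHausdorff (Ideal.span {(p : R)}) M := by
  have hle : ∀ n, Ideal.span {(p : R)} ^ n • (⊤ : Submodule R M) ≤ Fil n := by
    intro n
    rw [Ideal.span_singleton_pow, Submodule.smul_le]
    rintro r hr m -
    obtain ⟨a, rfl⟩ := Ideal.mem_span_singleton'.mp hr
    rw [mul_smul, ← Nat.cast_pow, Nat.cast_smul_eq_nsmul]
    exact (Fil n).smul_mem a (hpow n m)
  refine ⟨fun x hx ↦ ?_⟩
  have hx' : x ∈ ⨅ n, Fil n := mem_iInf _ |>.mpr fun n ↦ hle n (SModEq.zero.mp (hx n))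
  simpa [hsep] using hx'

theorem span_sup_smul_top_eq_top_of_comp_eq_nsmul {σ : R →+* R} (V : M →ₛₗ[σ] M) (F : M →+ M)
    (p : ℕ) (hVF : ∀ x, V (F x) = p • x) {ι κ : Type*} {x : ι → M} {y : κ → M}
    (hx : ∀ m, ∃ u, m - V u ∈ span R (range x)) (hy : ∀ u, ∃ w, u - F w ∈ span R (range y)) :
    span R (range (Sum.elim x (V ∘ y))) ⊔ Ideal.span {(p : R)} • ⊤ = ⊤ := by
  refine eq_top_iff.mpr fun m _ ↦ ?_
  obtain ⟨u, hu⟩ := hx m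
  obtain ⟨w, hw⟩ := hy u
  have hxV : m - V u ∈ span R (range (Sum.elim x (V ∘ y))) :=
    span_mono (by rw [Set.Sum.elim_range]; exact subset_union_left) hu
  have hVy : V (u - F w) ∈ span R (range (Sum.elim x (V ∘ y))) := by
    refine span_mono ?_ (image_span_subset_span V _ ⟨_, hw, rfl⟩)
    rw [Set.Sum.elim_range, range_comp]
    exact subset_union_right
  have hpw : (p : R) • w ∈ Ideal.span {(p : R)} • (⊤ : Submodule R M) :=
    smul_mem_smul (Ideal.mem_span_singleton_self _) mem_top
  have hm : m = (m - V u) + V (u - F w) + (p : R) • w := by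
    rw [map_sub, hVF, Nat.cast_smul_eq_nsmul]
    abel
  rw [hm]
  exact add_mem (add_mem (mem_sup_left hxV) (mem_sup_left hVy)) (mem_sup_right hpw)

end CommRing

theorem nsmul_pow_eq_iterate {M : Type*} [AddCommMonoid M] (F V : M →+ M) (p : ℕ)
    (hVF : ∀ x, V (F x) = p • x) (n : ℕ) (x : M) : p ^ n • x = V^[n] (F^[n] x) := by
  induction n generalizing x with
  | zero => simp
  | succ n ih =>
    rw [pow_succ, mul_smul, ← hVF, ← map_nsmul, ih, Function.iterate_succ_apply',
      Function.iterate_succ_apply]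

theorem stmt_1_general
    (p : ℕ) [Fact p.Prime]
    (k : Type*) [Field k] [CharP k p] [PerfectRing k p]
    (M : Type*) [AddCommGroup M] [Module (WittVector p k) M]
    (F V : M →+ M)
    -- `F` is `σ`-semilinear and `V` is `σ⁻¹`-semilinear for `σ` the Witt vector Frobenius
    (hV : ∀ (c : WittVector p k) (x : M),
      V (c • x) = ((WittVector.frobeniusEquiv p k).symm c) • V x)
    (hVF : ∀ x : M, V (F x) = p • x)
    -- the `V`-adic filtration, by submodules whose underlying sets are the images of `V^[n]`
    (Fil : ℕ → Submodule (WittVector p k) M)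
    (hFil : ∀ n, (Fil n : Set M) = Set.range ((V : M → M)^[n]))
    -- `M` is `V`-adically separated and complete
    (hsep : ⨅ n, Fil n = ⊥)
    -- each `M/V^n M` has finite length
    (hlen : ∀ n, IsFiniteLength (WittVector p k) (M ⧸ Fil n))
    -- `M/FM` has dimension at most `c`
    (NF : Submodule (WittVector p k) M) (hNF : (NF : Set M) = Set.range F)
    (c : ℕ)
    (hdim : Order.krullDim (Submodule (WittVector p k) (M ⧸ NF)) ≤ (c : WithBot ℕ∞)) :
    Module.Finite (WittVector p k) M := by
  have : IsHausdorff (Ideal.span {(p : WittVector p k)}) M :=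
    isHausdorff_span_natCast_of_iInf_eq_bot p Fil (fun n m ↦ by
      rw [← SetLike.mem_coe, hFil, nsmul_pow_eq_iterate F V p hVF]; exact mem_range_self _) hsep
  have : IsNoetherian (WittVector p k) (M ⧸ Fil 1) :=
    (isFiniteLength_iff_isNoetherian_isArtinian.mp (hlen 1)).1
  have : IsNoetherian (WittVector p k) (M ⧸ NF) :=
    (isFiniteLength_iff_isNoetherian_isArtinian.mp (isFiniteLength_of_krullDim_le hdim)).1
  obtain ⟨_, x, hx⟩ := (Fil 1).exists_fin_sup_span_eq_top
  obtain ⟨_, y, hy⟩ := NF.exists_fin_sup_span_eq_top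
  let Vₛₗ : M →ₛₗ[((WittVector.frobeniusEquiv p k).symm : WittVector p k →+* WittVector p k)] M :=
    { V with map_smul' := hV }
  have hVx : ∀ m, ∃ u, m - Vₛₗ u ∈ span _ (range x) := fun m ↦ by
    obtain ⟨_, hn, hmn⟩ := exists_sub_mem_of_sup_eq_top hx m
    rw [← SetLike.mem_coe, hFil, Function.iterate_one] at hn
    obtain ⟨u, rfl⟩ := hn
    exact ⟨u, hmn⟩
  have hFy : ∀ u, ∃ w, u - F w ∈ span _ (range y) := fun u ↦ by
    obtain ⟨_, hn, hun⟩ := exists_sub_mem_of_sup_eq_top hy u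
    rw [← SetLike.mem_coe, hNF] at hn
    obtain ⟨w, rfl⟩ := hn
    exact ⟨w, hun⟩
  have hgen := span_sup_smul_top_eq_top_of_comp_eq_nsmul Vₛₗ F p hVF hVx hFy
  exact Module.finite_def.mpr
    (fg_def.mpr ⟨_, finite_range _, span_range_eq_top_of_sup_smul_top_eq_top hgen⟩)

theorem stmt_1
    (p : ℕ) [Fact p.Prime]
    (k : Type*) [Field k] [CharP k p] [PerfectRing k p]
    (M : Type*) [AddCommGroup M] [Module (WittVector p k) M]
    (F V : M →+ M)
    -- `F` is `σ`-semilinear and `V` is `σ⁻¹`-semilinear for `σ` the Witt vector Frobenius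
    (hF : ∀ (c : WittVector p k) (x : M),
      F (c • x) = (WittVector.frobeniusEquiv p k c) • F x)
    (hV : ∀ (c : WittVector p k) (x : M),
      V (c • x) = ((WittVector.frobeniusEquiv p k).symm c) • V x)
    (hFV : ∀ x : M, F (V x) = p • x) (hVF : ∀ x : M, V (F x) = p • x)
    -- the `V`-adic filtration, by submodules whose underlying sets are the images of `V^[n]`
    (Fil : ℕ → Submodule (WittVector p k) M)
    (hFil : ∀ n, (Fil n : Set M) = Set.range ((V : M → M)^[n]))
    -- `M` is `V`-adically separated and complete
    (hsep : ⨅ n, Fil n = ⊥)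
    (hcomplete : ∀ x : ℕ → M, (∀ n, x (n + 1) - x n ∈ Fil n) → ∃ L, ∀ n, L - x n ∈ Fil n)
    -- each `M/V^n M` has finite length
    (hlen : ∀ n, IsFiniteLength (WittVector p k) (M ⧸ Fil n))
    -- `M/FM` has dimension at most `c`
    (NF : Submodule (WittVector p k) M) (hNF : (NF : Set M) = Set.range F)
    (c : ℕ)
    (hdim : Order.krullDim (Submodule (WittVector p k) (M ⧸ NF)) ≤ (c : WithBot ℕ∞)) :
    Module.Finite (WittVector p k) M :=
  stmt_1_general p k M F V hV hVF Fil hFil hsep hlen NF hNF c hdim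
end

section
/- Let N be a finitely generated module over a complete DVR W and let {N_n} be a decreasing family of submodules of N such that each N/N_n has finite length and ⋂_n N_n = 0. Then the topology on N defined by the family {N_n} coincides with the p-adic (maximal-ideal-adic) topology; in particular N is complete and closed in any ambient module for this topology. -/
/-!
A module `N ⧸ Nₙ` of finite length over the local ring `W` is killed by a power `𝔪ᵏ`, so
`𝔪ᵏ N ⊆ Nₙ`. The reverse cofinality is Chevalley's lemma: as `N ⧸ 𝔪ⁿ N` is Artinian, the chain
`Nₘ + 𝔪ⁿ N` stabilizes at some `Qₙ`, and then `Qₙ ⊆ Qₙ₊₁ + 𝔪ⁿ N`. Since `N` is finite over the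
complete ring `W`, it is `𝔪`-adically complete, so successive approximation writes every element of
`Qₙ` as an element of `⋂ₖ Qₖ` plus an element of `𝔪ⁿ N`; and `⋂ₖ Qₖ ⊆ ⋂ₘ Nₘ = 0` because each
`Nₘ` contains some `𝔪ᵏ N`. Completeness for `{Nₙ}` is inherited from `𝔪`-adic completeness along
the cofinality.
-/

open Submodule IsLocalRing

section Filtration

variable {R M : Type*} [CommRing R] [AddCommGroup M] [Module R M]

theorem sub_mem_of_forall_succ_sub_mem {F : ℕ → Submodule R M} (hF : Antitone F) {x : ℕ → M}
    (hx : ∀ i, x (i + 1) - x i ∈ F i) {i j : ℕ} (hij : i ≤ j) : x j - x i ∈ F i := by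
  induction j, hij using Nat.le_induction with
  | base => simp
  | succ j hij ih =>
    rw [← sub_add_sub_cancel]
    exact add_mem (hF hij (hx j)) ih

theorem exists_sub_mem_of_cofinal {F G : ℕ → Submodule R M} (hG : Antitone G)
    (hFG : ∀ n, ∃ m, F m ≤ G n) (hGF : ∀ n, ∃ m, G m ≤ F n)
    (hG_complete : ∀ y : ℕ → M, (∀ i j, i ≤ j → y j - y i ∈ G i) → ∃ L, ∀ i, L - y i ∈ G i)
    {x : ℕ → M} (hx : ∀ i j, i ≤ j → x j - x i ∈ F i) : ∃ L, ∀ i, L - x i ∈ F i := by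
  choose φ hφ using hFG
  obtain ⟨L, hL⟩ := hG_complete (x ∘ φ) fun k l hkl => by
    rcases le_total (φ k) (φ l) with h | h
    · exact hφ k (hx _ _ h)
    · exact sub_mem_comm_iff.mp (hG hkl (hφ l (hx _ _ h)))
  refine ⟨L, fun i => ?_⟩
  obtain ⟨ℓ, hℓ⟩ := hGF i
  rw [← sub_add_sub_cancel L (x (φ ℓ))]
  refine add_mem (hℓ (hL ℓ)) ?_
  rcases le_total i (φ ℓ) with h | h
  · exact hx _ _ h
  · exact sub_mem_comm_iff.mp (hℓ (hφ ℓ (hx _ _ h)))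

theorem isPrecomplete_of_finite (I : Ideal R) [IsPrecomplete I R] [Module.Finite R M] :
    IsPrecomplete I M := by
  rw [← AdicCompletion.of_surjective_iff]
  intro y
  obtain ⟨t, rfl⟩ := AdicCompletion.ofTensorProduct_surjective_of_finite I M y
  induction t using TensorProduct.induction_on with
  | zero => exact ⟨0, by simp⟩
  | tmul r x =>
    obtain ⟨s, rfl⟩ := AdicCompletion.of_surjective I R r
    refine ⟨s • x, ?_⟩
    rw [AdicCompletion.ofTensorProduct_tmul, map_smul]
    exact (algebraMap_smul (AdicCompletion I R) s _).symm
  | add t u ht hu =>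
    obtain ⟨a, ha⟩ := ht
    obtain ⟨b, hb⟩ := hu
    exact ⟨a + b, by simp [ha, hb]⟩

theorem IsPrecomplete.exists_sub_mem (I : Ideal R) [IsPrecomplete I M] {x : ℕ → M}
    (hx : ∀ i j, i ≤ j → x j - x i ∈ I ^ i • (⊤ : Submodule R M)) :
    ∃ L, ∀ i, L - x i ∈ I ^ i • (⊤ : Submodule R M) := by
  obtain ⟨L, hL⟩ := IsPrecomplete.prec ‹_› fun {i j} hij => by
    rw [SModEq.sub_mem]
    exact sub_mem_comm_iff.mp (hx i j hij)
  exact ⟨L, fun i => sub_mem_comm_iff.mp (SModEq.sub_mem.mp (hL i))⟩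

theorem exists_pow_smul_top_eq_bot_of_le_jacobson [IsNoetherian R M] [IsArtinian R M]
    {I : Ideal R} (hI : I ≤ (⊥ : Ideal R).jacobson) :
    ∃ k, I ^ k • (⊤ : Submodule R M) = ⊥ := by
  obtain ⟨k, hk⟩ := IsArtinian.monotone_stabilizes
    ⟨fun k => OrderDual.toDual (I ^ k • (⊤ : Submodule R M)), fun _ _ h => pow_smul_top_le I M h⟩
  refine ⟨k, eq_bot_of_le_smul_of_le_jacobson_bot I _ (IsNoetherian.noetherian _) ?_ hI⟩
  rw [← Submodule.mul_smul, ← pow_succ']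
  exact (OrderDual.toDual_inj.mp (hk (k + 1) k.le_succ)).le

theorem exists_maximalIdeal_pow_smul_top_le [IsLocalRing R] {P : Submodule R M}
    (h : IsFiniteLength R (M ⧸ P)) : ∃ k, maximalIdeal R ^ k • ⊤ ≤ P := by
  obtain ⟨_, _⟩ := isFiniteLength_iff_isNoetherian_isArtinian.mp h
  obtain ⟨k, hk⟩ := exists_pow_smul_top_eq_bot_of_le_jacobson (M := M ⧸ P)
    (maximalIdeal_le_jacobson (⊥ : Ideal R))
  refine ⟨k, ?_⟩
  calc maximalIdeal R ^ k • ⊤ ≤ comap P.mkQ ⊥ :=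
        map_le_iff_le_comap.mp (by rw [map_smul'', Submodule.map_top, range_mkQ, hk])
    _ = P := by rw [comap_bot, ker_mkQ]

theorem isArtinianRing_quotient_maximalIdeal_pow [IsLocalRing R] [IsNoetherianRing R] (n : ℕ) :
    IsArtinianRing (R ⧸ maximalIdeal R ^ n) := by
  rw [isArtinianRing_iff_krullDimLE_zero,
    Ideal.krullDimLE_zero_quotient_iff_forall_minimalPrimes_isMaximal]
  intro J hJ
  have hJ_prime := hJ.1.1
  rw [← (maximalIdeal.isMaximal R).eq_of_le hJ_prime.ne_top (hJ_prime.le_of_pow_le hJ.1.2)]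
  exact maximalIdeal.isMaximal R

theorem isArtinian_quotient_maximalIdeal_pow_smul_top [IsLocalRing R] [IsNoetherianRing R]
    [Module.Finite R M] (n : ℕ) :
    IsArtinian R (M ⧸ maximalIdeal R ^ n • (⊤ : Submodule R M)) :=
  have := isArtinianRing_quotient_maximalIdeal_pow (R := R) n
  isArtinian_of_surjective_algebraMap (R := R ⧸ maximalIdeal R ^ n) Ideal.Quotient.mk_surjective

theorem exists_forall_ge_sup_eq {F : ℕ → Submodule R M} (hF : Antitone F) (P : Submodule R M)
    [IsArtinian R (M ⧸ P)] : ∃ m₀, ∀ m, m₀ ≤ m → F m ⊔ P = F m₀ ⊔ P := by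
  obtain ⟨m₀, hm₀⟩ := IsArtinian.monotone_stabilizes
    ⟨fun m => OrderDual.toDual ((F m).map P.mkQ), fun _ _ h => map_mono (hF h)⟩
  refine ⟨m₀, fun m hm => ?_⟩
  have := congrArg (comap P.mkQ) (OrderDual.toDual_inj.mp (hm₀ m hm))
  rwa [comap_map_mkQ, comap_map_mkQ, sup_comm, sup_comm P, eq_comm] at this

theorem le_iInf_sup_pow_smul_top (I : Ideal R) [IsPrecomplete I M] {Q : ℕ → Submodule R M}
    (hQ : Antitone Q) (hIQ : ∀ n, I ^ n • ⊤ ≤ Q n) (hstep : ∀ n, Q n ≤ Q (n + 1) ⊔ I ^ n • ⊤)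
    (n : ℕ) : Q n ≤ (⨅ k, Q k) ⊔ I ^ n • ⊤ := by
  intro x hx
  have hlift : ∀ j, ∀ y ∈ Q j, ∃ z ∈ Q (j + 1), z - y ∈ I ^ j • (⊤ : Submodule R M) := by
    intro j y hy
    obtain ⟨z, hz, w, hw, rfl⟩ := mem_sup.mp (hstep j hy)
    exact ⟨z, hz, by simpa using neg_mem hw⟩
  choose! g hgQ hgI using hlift
  let y : ℕ → M := fun k => Nat.rec x (fun k yk => g (n + k) yk) k
  have hyQ : ∀ k, y k ∈ Q (n + k) := by
    intro k
    induction k with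
    | zero => exact hx
    | succ k ih => exact hgQ _ _ ih
  have hy : ∀ i j, i ≤ j → y j - y i ∈ I ^ (n + i) • (⊤ : Submodule R M) :=
    fun i j => sub_mem_of_forall_succ_sub_mem (fun a b h => pow_smul_top_le I M (by omega))
      (fun k => hgI _ _ (hyQ k))
  obtain ⟨L, hL⟩ := IsPrecomplete.exists_sub_mem I
    fun i j h => pow_smul_top_le I M (by omega) (hy i j h)
  have hLQ : L ∈ ⨅ k, Q k := mem_iInf _ |>.mpr fun k => by
    simpa using add_mem (hQ (by omega : k ≤ n + k) (hyQ k)) (hIQ k (hL k))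
  refine mem_sup.mpr ⟨L, hLQ, (y n - L) - (y n - y 0), ?_, by simp [y]⟩
  exact sub_mem (sub_mem_comm_iff.mp (hL n)) (by simpa using hy 0 n n.zero_le)

theorem exists_le_pow_smul_top_of_iInf_eq_bot (I : Ideal R) [IsPrecomplete I M]
    [∀ n, IsArtinian R (M ⧸ I ^ n • (⊤ : Submodule R M))] {F : ℕ → Submodule R M}
    (hF : Antitone F) (hIF : ∀ n, ∃ m, I ^ m • ⊤ ≤ F n) (hF_bot : ⨅ n, F n = ⊥) (n : ℕ) :
    ∃ m, F m ≤ I ^ n • ⊤ := by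
  choose m₀ hm₀ using fun n => exists_forall_ge_sup_eq hF (I ^ n • (⊤ : Submodule R M))
  let Q : ℕ → Submodule R M := fun n => F (m₀ n) ⊔ I ^ n • ⊤
  have hQ_le : ∀ n m, Q n ≤ F m ⊔ I ^ n • ⊤ := by
    intro n m
    rcases le_total (m₀ n) m with h | h
    · exact (hm₀ n m h).ge
    · exact sup_le_sup_right (hF h) _
  have hQ_anti : Antitone Q := fun a b hab =>
    (hQ_le b (m₀ a)).trans (sup_le_sup_left (pow_smul_top_le I M hab) _)
  have hQ_step : ∀ n, Q n ≤ Q (n + 1) ⊔ I ^ n • ⊤ := fun n =>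
    (hQ_le n (m₀ (n + 1))).trans (sup_le_sup_right le_sup_left _)
  have hQ_bot : ⨅ k, Q k = ⊥ := by
    refine eq_bot_iff.mpr (hF_bot ▸ le_iInf fun m => ?_)
    obtain ⟨ℓ, hℓ⟩ := hIF m
    exact (iInf_le Q ℓ).trans ((hQ_le ℓ m).trans (sup_le le_rfl hℓ))
  refine ⟨m₀ n, ?_⟩
  calc F (m₀ n) ≤ Q n := le_sup_left
    _ ≤ (⨅ k, Q k) ⊔ I ^ n • ⊤ :=
        le_iInf_sup_pow_smul_top I hQ_anti (fun _ => le_sup_right) hQ_step n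
    _ = I ^ n • ⊤ := by rw [hQ_bot, bot_sup_eq]

end Filtration

theorem stmt_3
    (W : Type*) [CommRing W] [IsDomain W] [IsDiscreteValuationRing W]
    [IsAdicComplete (IsLocalRing.maximalIdeal W) W]
    (N : Type*) [AddCommGroup N] [Module W N] [Module.Finite W N]
    (Nn : ℕ → Submodule W N) (hdec : Antitone Nn)
    (hlen : ∀ n, IsFiniteLength W (N ⧸ Nn n))
    (hint : ⨅ n, Nn n = ⊥) :
    -- the two filtrations are mutually cofinal, i.e. define the same topology
    ((∀ n, ∃ m, Nn m ≤ (IsLocalRing.maximalIdeal W ^ n) • (⊤ : Submodule W N)) ∧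
      (∀ n, ∃ m, (IsLocalRing.maximalIdeal W ^ m) • (⊤ : Submodule W N) ≤ Nn n)) ∧
    -- in particular `N` is complete for the topology defined by `{N_n}`
    (∀ x : ℕ → N, (∀ i, x (i + 1) - x i ∈ Nn i) → ∃ L, ∀ i, L - x i ∈ Nn i) := by
  have := isPrecomplete_of_finite (M := N) (maximalIdeal W)
  have := isArtinian_quotient_maximalIdeal_pow_smul_top (R := W) (M := N)
  have hadic_le : ∀ n, ∃ m, maximalIdeal W ^ m • ⊤ ≤ Nn n :=
    fun n => exists_maximalIdeal_pow_smul_top_le (hlen n)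
  have hle_adic := exists_le_pow_smul_top_of_iInf_eq_bot (maximalIdeal W) hdec hadic_le hint
  refine ⟨⟨hle_adic, hadic_le⟩, fun x hx => ?_⟩
  exact exists_sub_mem_of_cofinal (fun _ _ h => pow_smul_top_le _ N h) hle_adic hadic_le
    (fun _ => IsPrecomplete.exists_sub_mem _) fun _ _ => sub_mem_of_forall_succ_sub_mem hdec hx
end

section
/- (Nygaard's lemma setup) Let M, N be modules over W = W(k) equipped with σ-semilinear operators F and a map d : M → N satisfying F d V = d, where V is a σ^{-1}-semilinear operator on M with FV = p. If the increasing sequences of submodules {Ker(F^n d)}_{n} and {Im(F^n d)}_{n} are both stationary, M is separated and complete for a topology for which d is continuous into a separated N, then d = 0. -/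
/-!
STATEMENT 19 (Nygaard's lemma): Let `W = W(k)` (`k` perfect of characteristic `p`) with
Frobenius `σ`, and let `M, N` be `W`-modules with `σ`-semilinear operators `F` (on `M` and
`N`), a `σ⁻¹`-semilinear operator `V` on `M` with `FV = VF = p`, and an additive map
`d : M → N` with `F d V = d`.  If the increasing sequences `{Ker(F^n d)}` and `{Im(F^n d)}`
are both stationary, `M` is `V`-adically separated and complete, `N` carries a separated
topology (given by a filtration), and `d` is continuous, then `d = 0`.
-/
theorem stmt_19
    (p : ℕ) [Fact p.Prime]
    (k : Type*) [Field k] [CharP k p] [PerfectRing k p]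
    (M N : Type*) [AddCommGroup M] [Module (WittVector p k) M]
    [AddCommGroup N] [Module (WittVector p k) N]
    (F : M →+ M) (FN : N →+ N) (V : M →+ M) (d : M →+ N)
    -- semilinearity of `F`, `V`
    (hF : ∀ (c : WittVector p k) (x : M), F (c • x) = (WittVector.frobeniusEquiv p k c) • F x)
    (hFN : ∀ (c : WittVector p k) (x : N), FN (c • x) = (WittVector.frobeniusEquiv p k c) • FN x)
    (hV : ∀ (c : WittVector p k) (x : M), V (c • x) = ((WittVector.frobeniusEquiv p k).symm c) • V x)
    -- `FV = VF = p` on `M`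
    (hFV : ∀ x : M, F (V x) = p • x) (hVF : ∀ x : M, V (F x) = p • x)
    -- `F ∘ d ∘ V = d`
    (hFdV : ∀ x : M, FN (d (V x)) = d x)
    -- the `V`-adic filtration on `M`, separated and complete
    (FilM : ℕ → Submodule (WittVector p k) M)
    (hFil : ∀ n, (FilM n : Set M) = Set.range ((V : M → M)^[n]))
    (hsep : ⨅ n, FilM n = ⊥)
    (hcomplete : ∀ x : ℕ → M, (∀ n, x (n + 1) - x n ∈ FilM n) → ∃ L, ∀ n, L - x n ∈ FilM n)
    -- a separated topology on `N`, for which `d` is continuous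
    (GN : ℕ → Submodule (WittVector p k) N) (hGanti : Antitone GN)
    (hNsep : ⨅ n, GN n = ⊥)
    (hcont : ∀ n, ∃ m, ∀ x ∈ FilM m, d x ∈ GN n)
    -- the sequences `Ker(F^n d)` and `Im(F^n d)` are stationary
    (hker : ∃ n₀, ∀ n, n₀ ≤ n →
      {x : M | (FN : N → N)^[n] (d x) = 0} = {x : M | (FN : N → N)^[n₀] (d x) = 0})
    (him : ∃ n₀, ∀ n, n₀ ≤ n →
      Set.range (fun x : M => (FN : N → N)^[n] (d x))
        = Set.range (fun x : M => (FN : N → N)^[n₀] (d x))) :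
    d = 0 := by

  obtain ⟨nk, hk⟩ := hker
  obtain ⟨ni, hi⟩ := him
  -- `FN^[j] (d (V^[j] x)) = d x`
  have hlow : ∀ (j : ℕ) (x : M), (FN : N → N)^[j] (d ((V : M → M)^[j] x)) = d x := by
    intro j
    induction j with
    | zero => intro x; simp
    | succ j ih =>
      intro x
      rw [Function.iterate_succ_apply' (V : M → M) j x,
          Function.iterate_succ_apply (FN : N → N) j, hFdV]
      exact ih x
  -- iterates of `FN` are additive
  have hsub : ∀ (a : ℕ) (u v : N),
      (FN : N → N)^[a] (u - v) = (FN : N → N)^[a] u - (FN : N → N)^[a] v := by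
    intro a
    induction a with
    | zero => intro u v; simp
    | succ a ih =>
      intro u v
      rw [Function.iterate_succ_apply (FN : N → N) a, map_sub,
          Function.iterate_succ_apply (FN : N → N) a u,
          Function.iterate_succ_apply (FN : N → N) a v]
      exact ih _ _
  -- `V` preserves the stable kernel `K = Ker (FN^[nk] ∘ d)`
  have hVK : ∀ x : M, (FN : N → N)^[nk] (d x) = 0 → (FN : N → N)^[nk] (d (V x)) = 0 := by
    intro x hx
    have h1 : (FN : N → N)^[nk + 1] (d (V x)) = 0 := by
      rw [Function.iterate_succ_apply (FN : N → N) nk, hFdV]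
      exact hx
    exact (Set.ext_iff.mp (hk (nk + 1) (Nat.le_succ nk)) (V x)).mp h1
  have hVKiter : ∀ (j : ℕ) (x : M),
      (FN : N → N)^[nk] (d x) = 0 → (FN : N → N)^[nk] (d ((V : M → M)^[j] x)) = 0 := by
    intro j
    induction j with
    | zero => intro x hx; exact hx
    | succ j ih =>
      intro x hx
      rw [Function.iterate_succ_apply' (V : M → M) j x]
      exact hVK _ (ih x hx)
  -- the stable kernel is contained in `Ker d`
  have hKd : ∀ x : M, (FN : N → N)^[nk] (d x) = 0 → d x = 0 := by
    intro x hx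
    rw [← hlow nk x]
    exact hVKiter nk x hx
  ext x
  simp only [AddMonoidHom.zero_apply]
  have hmem : ∀ n : ℕ, d x ∈ GN n := by
    intro n
    obtain ⟨m, hm⟩ := hcont n
    set a := ni + (nk + m) with ha
    obtain ⟨z, hz⟩ : ∃ z : M, (FN : N → N)^[ni] (d z) = (FN : N → N)^[a] (d x) := by
      have h2 : (FN : N → N)^[a] (d x)
          ∈ Set.range (fun y : M => (FN : N → N)^[ni] (d y)) := by
        rw [← hi a (Nat.le_add_right ni (nk + m))]
        exact ⟨x, rfl⟩
      exact h2
    have hzz : (FN : N → N)^[a] (d ((V : M → M)^[nk + m] z)) = (FN : N → N)^[a] (d x) := by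
      rw [ha, Function.iterate_add_apply (FN : N → N) ni (nk + m), hlow (nk + m) z]
      exact hz
    have hker0 : (FN : N → N)^[nk] (d (x - (V : M → M)^[nk + m] z)) = 0 := by
      have h0 : (FN : N → N)^[a] (d (x - (V : M → M)^[nk + m] z)) = 0 := by
        rw [map_sub, hsub a, hzz, sub_self]
      exact (Set.ext_iff.mp (hk a (by omega)) _).mp h0
    have hdx : d x = d ((V : M → M)^[nk + m] z) := by
      have h3 := hKd _ hker0
      rw [map_sub, sub_eq_zero] at h3
      exact h3
    rw [hdx]
    apply hm
    rw [← SetLike.mem_coe, hFil m]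
    refine ⟨(V : M → M)^[nk] z, ?_⟩
    rw [← Function.iterate_add_apply (V : M → M) m nk z, Nat.add_comm m nk]
  have h4 : d x ∈ ⨅ n, GN n := (Submodule.mem_iInf GN).mpr hmem
  rw [hNsep] at h4
  exact h4
end
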